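/- arXiv:2010.08122 — 3 statements merged into one kernel-verified Lean document; each statement's English description precedes it below -/
import Mathlib

section
/- Let $r_1,\ldots,r_m$ be reals with $r_i < 1$, $r_i \neq 0$, and let $s_i = r_i/(r_i - 1)$. Let $r < 1$, $r \neq 0$, and $s = r/(r-1)$. For vectors $x_i, y_i \in \mathbb{R}^{n_i}$ with positive entries ($i = 1,\ldots,m$), define $X_i = \|x_i\|_{r_i}$ and $Y_i = \|y_i\|_{s_i}$. Then $\sum_{i=1}^m x_i \cdot y_i \geq \left(\sum_{i=1}^m X_i^r\right)^{1/r} \left(\sum_{i=1}^m Y_i^s\right)^{1/s}$. -/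
/-!
Reverse Hölder for `0 < p < 1` is ordinary Hölder with the conjugate exponents `1/p`, `1/(1-p)`
applied to `(f g)^p` and `g^(-p)`, since `g^(-p/(1-p)) = g^q`; for `p < 0` the conjugate `q` lies
in `(0, 1)` and the roles of `f` and `g` swap. The theorem is reverse Hölder inside each block
followed by reverse Hölder for the block norms `X i`, `Y i`. An empty block has `X i = Y i = 0`,
and such a coordinate contributes nothing to either side because `0 ^ t = 0` for `t ≠ 0`.
-/

open Finset

namespace Real

variable {ι : Type*} {s : Finset ι} {f g : ι → ℝ} {p q : ℝ}

theorem sum_rpow_le_inner_rpow_mul_sum_rpow (hp₀ : 0 < p) (hp₁ : p < 1) (hq : q = p / (p - 1))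
    (hf : ∀ i ∈ s, 0 ≤ f i) (hg : ∀ i ∈ s, 0 < g i) :
    ∑ i ∈ s, f i ^ p ≤ (∑ i ∈ s, f i * g i) ^ p * (∑ i ∈ s, g i ^ q) ^ (1 - p) := by
  have hpq : p⁻¹.HolderConjugate (1 - p)⁻¹ := .inv_one_sub_inv hp₀ hp₁
  have holder := inner_le_Lp_mul_Lq_of_nonneg (s := s) (f := fun i ↦ (f i * g i) ^ p)
    (g := fun i ↦ g i ^ (-p)) hpq (fun i hi ↦ rpow_nonneg (mul_nonneg (hf i hi) (hg i hi).le) p)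
    (fun i hi ↦ (rpow_pos_of_pos (hg i hi) _).le)
  convert holder using 2 with i hi
  · rw [mul_rpow (hf i hi) (hg i hi).le, mul_assoc, ← rpow_add (hg i hi), add_neg_cancel,
      rpow_zero, mul_one]
  · rw [one_div, inv_inv]
    congr 1
    refine sum_congr rfl fun i hi ↦ ?_
    rw [← rpow_mul (mul_nonneg (hf i hi) (hg i hi).le), mul_inv_cancel₀ hp₀.ne', rpow_one]
  · rw [one_div, inv_inv]
    congr 1
    refine sum_congr rfl fun i hi ↦ ?_
    rw [← rpow_mul (hg i hi).le, hq]
    congr 1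
    field_simp [sub_ne_zero.2 hp₁.ne, sub_ne_zero.2 hp₁.ne']
    ring

theorem Lp_mul_Lq_le_inner_of_pos_of_lt_one (hp₀ : 0 < p) (hp₁ : p < 1) (hq : q = p / (p - 1))
    (hf : ∀ i ∈ s, 0 ≤ f i) (hg : ∀ i ∈ s, 0 < g i) :
    (∑ i ∈ s, f i ^ p) ^ (1 / p) * (∑ i ∈ s, g i ^ q) ^ (1 / q) ≤ ∑ i ∈ s, f i * g i := by
  rcases s.eq_empty_or_nonempty with rfl | hs
  · simp [zero_rpow (inv_ne_zero hp₀.ne')]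
  have hfg : 0 ≤ ∑ i ∈ s, f i * g i := sum_nonneg fun i hi ↦ mul_nonneg (hf i hi) (hg i hi).le
  have hexp : (1 - p) * (1 / p) + 1 / q = 0 := by
    rw [hq]
    field_simp [sub_ne_zero.2 hp₁.ne]
    ring
  have hG : 0 < ∑ i ∈ s, g i ^ q := sum_pos (fun i hi ↦ rpow_pos_of_pos (hg i hi) q) hs
  calc (∑ i ∈ s, f i ^ p) ^ (1 / p) * (∑ i ∈ s, g i ^ q) ^ (1 / q)
      ≤ ((∑ i ∈ s, f i * g i) ^ p * (∑ i ∈ s, g i ^ q) ^ (1 - p)) ^ (1 / p) *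
          (∑ i ∈ s, g i ^ q) ^ (1 / q) := by
        gcongr
        exacts [sum_nonneg fun i hi ↦ rpow_nonneg (hf i hi) p,
          sum_rpow_le_inner_rpow_mul_sum_rpow hp₀ hp₁ hq hf hg]
    _ = ∑ i ∈ s, f i * g i := by
        rw [mul_rpow (rpow_nonneg hfg _) (rpow_nonneg hG.le _), ← rpow_mul hfg,
          mul_one_div_cancel hp₀.ne', rpow_one, ← rpow_mul hG.le, mul_assoc, ← rpow_add hG, hexp,
          rpow_zero, mul_one]

theorem Lp_mul_Lq_le_inner_of_pos (hp₁ : p < 1) (hp₀ : p ≠ 0) (hq : q = p / (p - 1))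
    (hf : ∀ i ∈ s, 0 < f i) (hg : ∀ i ∈ s, 0 < g i) :
    (∑ i ∈ s, f i ^ p) ^ (1 / p) * (∑ i ∈ s, g i ^ q) ^ (1 / q) ≤ ∑ i ∈ s, f i * g i := by
  rcases hp₀.lt_or_gt with hp_neg | hp_pos
  · have hp₁' : p - 1 ≠ 0 := sub_ne_zero.2 hp₁.ne
    have hq₀ : 0 < q := hq ▸ div_pos_of_neg_of_neg hp_neg (by linarith)
    have hq₁ : q < 1 := hq ▸ (div_lt_one_of_neg (by linarith)).2 (by linarith)
    have hp : p = q / (q - 1) := by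
      rw [hq]
      field_simp
      ring
    rw [mul_comm]
    simpa only [mul_comm (g _)] using
      Lp_mul_Lq_le_inner_of_pos_of_lt_one hq₀ hq₁ hp (fun i hi ↦ (hg i hi).le) hf
  · exact Lp_mul_Lq_le_inner_of_pos_of_lt_one hp_pos hp₁ hq (fun i hi ↦ (hf i hi).le) hg

theorem Lp_mul_Lq_le_inner_of_nonneg (hp₁ : p < 1) (hp₀ : p ≠ 0) (hq : q = p / (p - 1))
    (hf : ∀ i ∈ s, 0 ≤ f i) (hg : ∀ i ∈ s, 0 ≤ g i) (hfg : ∀ i ∈ s, f i = 0 ↔ g i = 0) :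
    (∑ i ∈ s, f i ^ p) ^ (1 / p) * (∑ i ∈ s, g i ^ q) ^ (1 / q) ≤ ∑ i ∈ s, f i * g i := by
  classical
  have hq₀ : q ≠ 0 := hq ▸ div_ne_zero hp₀ (sub_ne_zero.2 hp₁.ne)
  have hF : ∑ i ∈ s with f i ≠ 0, f i ^ p = ∑ i ∈ s, f i ^ p :=
    sum_filter_of_ne fun i _ h hf₀ ↦ h (by rw [hf₀, zero_rpow hp₀])
  have hG : ∑ i ∈ s with f i ≠ 0, g i ^ q = ∑ i ∈ s, g i ^ q :=
    sum_filter_of_ne fun i hi h hf₀ ↦ h (by rw [(hfg i hi).1 hf₀, zero_rpow hq₀])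
  have hFG : ∑ i ∈ s with f i ≠ 0, f i * g i = ∑ i ∈ s, f i * g i :=
    sum_filter_of_ne fun i _ h hf₀ ↦ h (by rw [hf₀, zero_mul])
  rw [← hF, ← hG, ← hFG]
  refine Lp_mul_Lq_le_inner_of_pos hp₁ hp₀ hq (fun i hi ↦ ?_) (fun i hi ↦ ?_) <;>
    obtain ⟨hi, hf₀⟩ := mem_filter.1 hi
  · exact (hf i hi).lt_of_ne' hf₀
  · exact (hg i hi).lt_of_ne' (mt (hfg i hi).2 hf₀)

theorem rpow_one_div_sum_rpow_eq_zero_iff [Fintype ι] (hp : p ≠ 0) (hf : ∀ i, 0 < f i) :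
    (∑ i, f i ^ p) ^ (1 / p) = 0 ↔ IsEmpty ι := by
  rcases isEmpty_or_nonempty ι with hι | hι
  · simp [zero_rpow (inv_ne_zero hp), hι]
  · simp only [not_isEmpty_of_nonempty, iff_false]
    exact (rpow_pos_of_pos (sum_pos (fun i _ ↦ rpow_pos_of_pos (hf i) p) univ_nonempty) _).ne'

end Real

theorem holder_direct_sum (m : ℕ) (n : Fin m → ℕ) (rr : Fin m → ℝ)
    (hrr : ∀ i, rr i < 1) (hrr0 : ∀ i, rr i ≠ 0)
    (ss : Fin m → ℝ) (hss : ∀ i, ss i = rr i / (rr i - 1))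
    (r : ℝ) (hr : r < 1) (hr0 : r ≠ 0) (s : ℝ) (hs : s = r / (r - 1))
    (x y : (i : Fin m) → Fin (n i) → ℝ)
    (hx : ∀ i j, 0 < x i j) (hy : ∀ i j, 0 < y i j) :
    (∑ i, ((∑ j, x i j ^ rr i) ^ (1 / rr i)) ^ r) ^ (1 / r) *
      (∑ i, ((∑ j, y i j ^ ss i) ^ (1 / ss i)) ^ s) ^ (1 / s)
      ≤ ∑ i, ∑ j, x i j * y i j := by
  have hss0 (i : Fin m) : ss i ≠ 0 := hss i ▸ div_ne_zero (hrr0 i) (sub_ne_zero.2 (hrr i).ne)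
  have hX (i : Fin m) : 0 ≤ (∑ j, x i j ^ rr i) ^ (1 / rr i) :=
    Real.rpow_nonneg (sum_nonneg fun j _ ↦ (Real.rpow_pos_of_pos (hx i j) _).le) _
  have hY (i : Fin m) : 0 ≤ (∑ j, y i j ^ ss i) ^ (1 / ss i) :=
    Real.rpow_nonneg (sum_nonneg fun j _ ↦ (Real.rpow_pos_of_pos (hy i j) _).le) _
  have hXY (i : Fin m) :
      (∑ j, x i j ^ rr i) ^ (1 / rr i) = 0 ↔ (∑ j, y i j ^ ss i) ^ (1 / ss i) = 0 := by
    rw [Real.rpow_one_div_sum_rpow_eq_zero_iff (hrr0 i) (hx i),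
      Real.rpow_one_div_sum_rpow_eq_zero_iff (hss0 i) (hy i)]
  calc _ ≤ ∑ i, (∑ j, x i j ^ rr i) ^ (1 / rr i) * (∑ j, y i j ^ ss i) ^ (1 / ss i) :=
        Real.Lp_mul_Lq_le_inner_of_nonneg hr hr0 hs (fun i _ ↦ hX i) (fun i _ ↦ hY i)
          (fun i _ ↦ hXY i)
    _ ≤ ∑ i, ∑ j, x i j * y i j := sum_le_sum fun i _ ↦
        Real.Lp_mul_Lq_le_inner_of_pos (hrr i) (hrr0 i) (hss i) (fun j _ ↦ hx i j)
          (fun j _ ↦ hy i j)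
end

section
/- Let $r_1,\ldots,r_m$ be reals with $r_i < 1$, $r_i \neq 0$, $s_i = r_i/(r_i-1)$, and let $\theta$ be a positive weight vector summing to 1. For vectors $x_i, y_i \in \mathbb{R}^{n_i}$ with positive entries, define $X_i = \|x_i\|_{r_i}$, $Y_i = \|y_i\|_{s_i}$. Then $\sum_{i=1}^m x_i \cdot y_i \geq \prod_{i=1}^m X_i^{\theta_i} \cdot \prod_{i=1}^m (Y_i/\theta_i)^{\theta_i}$. -/
/-!
For `0 < r < 1` the conjugate exponent `s = r / (r - 1)` is negative, and Hölder's inequality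
with exponents `1` and `-s` applied to `x = (x * y) * y⁻¹` gives the reverse Hölder inequality
`‖x‖_r ‖y‖_s ≤ x ⬝ y`; for `r < 0` the roles of `(x, r)` and `(y, s)` swap. Summing over the
blocks, each block sum dominates `X_i Y_i`, and the weighted AM-GM inequality
`∏ (a_i / θ_i) ^ θ_i ≤ ∑ θ_i (a_i / θ_i) = ∑ a_i` finishes the proof.
-/

open Finset Real

noncomputable def rpowNorm {ι : Type*} [Fintype ι] (t : ℝ) (x : ι → ℝ) : ℝ :=
  (∑ j, x j ^ t) ^ (1 / t)

section ReverseHolder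

variable {ι : Type*} [Fintype ι] {r s : ℝ} {x y : ι → ℝ}

lemma sum_rpow_le_of_inv_add_inv_eq_one (hr : 0 < r) (hr1 : r < 1) (hrs : r⁻¹ + s⁻¹ = 1)
    (hx : ∀ j, 0 ≤ x j) (hy : ∀ j, 0 < y j) :
    ∑ j, x j ^ r ≤ (∑ j, x j * y j) ^ r * (∑ j, y j ^ s) ^ (1 - r) := by
  have hs : s⁻¹ = 1 - r⁻¹ := by linarith
  have hs0 : 0 < -s := neg_pos.mpr <| inv_lt_zero.mp <| by linarith [one_lt_inv₀ hr |>.mpr hr1]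
  have htriple : HolderTriple 1 (-s) r :=
    ⟨by rw [inv_neg, hs, inv_one]; ring, one_pos, hs0⟩
  have h := Lr_rpow_le_Lp_mul_Lq_of_nonneg univ (f := fun j ↦ x j * y j) (g := fun j ↦ (y j)⁻¹)
    htriple (fun j _ ↦ mul_nonneg (hx j) (hy j).le) (fun j _ ↦ (inv_pos.mpr (hy j)).le)
  have hexp : r / -s = 1 - r := by
    rw [div_neg, div_eq_mul_inv, hs]; field_simp; ring
  simpa only [mul_inv_cancel_right₀ (hy _).ne', rpow_one, div_one, inv_rpow (hy _).le,
    rpow_neg (hy _).le, inv_inv, hexp] using h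

lemma rpowNorm_mul_rpowNorm_le_of_pos (hr : 0 < r) (hr1 : r < 1) (hrs : r⁻¹ + s⁻¹ = 1)
    (hx : ∀ j, 0 ≤ x j) (hy : ∀ j, 0 < y j) :
    rpowNorm r x * rpowNorm s y ≤ ∑ j, x j * y j := by
  rcases isEmpty_or_nonempty ι with hι | hι
  · simp [rpowNorm, zero_rpow (inv_ne_zero hr.ne')]
  set S := ∑ j, x j * y j
  set B := ∑ j, y j ^ s
  have hS : 0 ≤ S := sum_nonneg fun j _ ↦ mul_nonneg (hx j) (hy j).le
  have hB : 0 < B := sum_pos (fun j _ ↦ rpow_pos_of_pos (hy j) s) univ_nonempty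
  have hexp : (1 - r) * (1 / r) + 1 / s = 0 := by
    rw [one_div, one_div, show s⁻¹ = 1 - r⁻¹ by linarith]; field_simp; ring
  calc rpowNorm r x * rpowNorm s y
      ≤ (S ^ r * B ^ (1 - r)) ^ (1 / r) * B ^ (1 / s) := by
        unfold rpowNorm
        gcongr
        · exact sum_nonneg fun j _ ↦ rpow_nonneg (hx j) r
        · exact sum_rpow_le_of_inv_add_inv_eq_one hr hr1 hrs hx hy
    _ = S := by
        rw [mul_rpow (rpow_nonneg hS r) (rpow_nonneg hB.le _), ← rpow_mul hS,
          mul_one_div_cancel hr.ne', rpow_one, ← rpow_mul hB.le, mul_assoc,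
          ← rpow_add hB, hexp, rpow_zero, mul_one]

lemma rpowNorm_mul_rpowNorm_le (hr0 : r ≠ 0) (hr1 : r < 1) (hrs : r⁻¹ + s⁻¹ = 1)
    (hx : ∀ j, 0 < x j) (hy : ∀ j, 0 < y j) :
    rpowNorm r x * rpowNorm s y ≤ ∑ j, x j * y j := by
  rcases hr0.lt_or_gt with hr | hr
  · have hs1 : 1 < s⁻¹ := by linarith [inv_lt_zero.mpr hr]
    have hs : 0 < s := inv_pos.mp (one_pos.trans hs1)
    rw [mul_comm]
    simp_rw [mul_comm (x _)]
    exact rpowNorm_mul_rpowNorm_le_of_pos hs (one_lt_inv₀ hs |>.mp hs1) (by linarith)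
      (fun j ↦ (hy j).le) hx
  · exact rpowNorm_mul_rpowNorm_le_of_pos hr hr1 hrs (fun j ↦ (hx j).le) hy

end ReverseHolder

lemma prod_div_rpow_le_sum {ι : Type*} [Fintype ι] {θ a : ι → ℝ} (hθ : ∀ i, 0 < θ i)
    (hθ1 : ∑ i, θ i = 1) (ha : ∀ i, 0 ≤ a i) :
    ∏ i, (a i / θ i) ^ θ i ≤ ∑ i, a i := by
  calc ∏ i, (a i / θ i) ^ θ i ≤ ∑ i, θ i * (a i / θ i) :=
        geom_mean_le_arith_mean_weighted univ θ _ (fun i _ ↦ (hθ i).le) hθ1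
          fun i _ ↦ div_nonneg (ha i) (hθ i).le
    _ = ∑ i, a i := sum_congr rfl fun i _ ↦ mul_div_cancel₀ _ (hθ i).ne'

theorem holder_direct_sum_cobb_douglas (m : ℕ) (n : Fin m → ℕ) (rr : Fin m → ℝ)
    (hrr : ∀ i, rr i < 1) (hrr0 : ∀ i, rr i ≠ 0)
    (ss : Fin m → ℝ) (hss : ∀ i, ss i = rr i / (rr i - 1))
    (θ : Fin m → ℝ) (hθ : ∀ i, 0 < θ i) (hθ1 : ∑ i, θ i = 1)
    (x y : (i : Fin m) → Fin (n i) → ℝ)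
    (hx : ∀ i j, 0 < x i j) (hy : ∀ i j, 0 < y i j) :
    (∏ i, ((∑ j, x i j ^ rr i) ^ (1 / rr i)) ^ θ i) *
      ∏ i, (((∑ j, y i j ^ ss i) ^ (1 / ss i)) / θ i) ^ θ i
      ≤ ∑ i, ∑ j, x i j * y i j := by
  set X := fun i ↦ rpowNorm (rr i) (x i)
  set Y := fun i ↦ rpowNorm (ss i) (y i)
  have hX : ∀ i, 0 ≤ X i := fun i ↦
    rpow_nonneg (sum_nonneg fun j _ ↦ rpow_nonneg (hx i j).le _) _
  have hY : ∀ i, 0 ≤ Y i := fun i ↦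
    rpow_nonneg (sum_nonneg fun j _ ↦ rpow_nonneg (hy i j).le _) _
  have hXY : ∀ i, X i * Y i ≤ ∑ j, x i j * y i j := fun i ↦
    rpowNorm_mul_rpowNorm_le (hrr0 i) (hrr i)
      (by rw [hss i, inv_div, sub_div, div_self (hrr0 i), one_div]; ring) (hx i) (hy i)
  calc (∏ i, X i ^ θ i) * ∏ i, (Y i / θ i) ^ θ i
      = ∏ i, (X i * Y i / θ i) ^ θ i := by
        rw [← prod_mul_distrib]
        refine prod_congr rfl fun i _ ↦ ?_
        rw [← mul_rpow (hX i) (div_nonneg (hY i) (hθ i).le), mul_div_assoc]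
    _ ≤ ∏ i, ((∑ j, x i j * y i j) / θ i) ^ θ i := by
        have hXYθ : ∀ i, 0 ≤ X i * Y i / θ i := fun i ↦
          div_nonneg (mul_nonneg (hX i) (hY i)) (hθ i).le
        refine prod_le_prod (fun i _ ↦ rpow_nonneg (hXYθ i) _) fun i _ ↦ ?_
        exact rpow_le_rpow (hXYθ i) (div_le_div_of_nonneg_right (hXY i) (hθ i).le) (hθ i).le
    _ ≤ ∑ i, ∑ j, x i j * y i j :=
        prod_div_rpow_le_sum hθ hθ1 fun i ↦ sum_nonneg fun j _ ↦ (mul_pos (hx i j) (hy i j)).le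
end

section
/- Let $r < 1$, $r \neq 0$, $s = r/(r-1)$, $m > 0$, and $p \in \mathbb{R}^n$ with positive entries. Then the maximum of $(\sum_i x_i^r)^{1/r}$ over positive vectors $x$ with $\sum_i p_i x_i \leq m$ equals $m (\sum_i p_i^s)^{-1/s}$, attained at $x_i = m\, p_i^{s-1} / \sum_j p_j^s$. -/
open Finset

/-! If `r < 1`, `r ≠ 0` and `r⁻¹ + s⁻¹ = 1`, exactly one of `r`, `s` lies in `(0, 1)`. For that
exponent `a`, Hölder's inequality with the conjugate pair `a⁻¹`, `(1 - a)⁻¹`, applied to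
`uᵢ ^ a = (uᵢ wᵢ) ^ a * wᵢ ^ (-a)`, gives the reverse Hölder inequality
`‖u‖_a ‖w‖_b ≤ ∑ uᵢ wᵢ`, which is symmetric in the two exponents. With `u = x`, `w = p` it bounds
the utility of any bundle in the budget set by `m / ‖p‖_s`, and the demand
`m p ^ (s - 1) / ‖p‖_s ^ s` spends exactly `m` and attains the bound. -/

namespace Real

variable {ι : Type*} (s : Finset ι) {a b : ℝ} {u w : ι → ℝ}

theorem sum_rpow_le_inner_rpow_mul_sum_rpow_s9 (ha₀ : 0 < a) (ha₁ : a < 1) (hab : a⁻¹ + b⁻¹ = 1)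
    (hu : ∀ i ∈ s, 0 < u i) (hw : ∀ i ∈ s, 0 < w i) :
    ∑ i ∈ s, u i ^ a ≤ (∑ i ∈ s, u i * w i) ^ a * (∑ i ∈ s, w i ^ b) ^ (1 - a) := by
  have hb : -a * (1 - a)⁻¹ = b := by
    have h1a : 1 - a ≠ 0 := by linarith
    have ha1 : a - 1 ≠ 0 := by linarith
    rw [← inv_inv b, eq_sub_of_add_eq' hab]
    field_simp
    ring
  have holder := inner_le_Lp_mul_Lq_of_nonneg s (HolderConjugate.inv_one_sub_inv ha₀ ha₁)
    (f := fun i => (u i * w i) ^ a) (g := fun i => w i ^ (-a))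
    (fun i hi => rpow_nonneg (mul_pos (hu i hi) (hw i hi)).le _)
    (fun i hi => rpow_nonneg (hw i hi).le _)
  calc ∑ i ∈ s, u i ^ a = ∑ i ∈ s, (u i * w i) ^ a * w i ^ (-a) := by
        refine sum_congr rfl fun i hi => ?_
        rw [mul_rpow (hu i hi).le (hw i hi).le, rpow_neg (hw i hi).le,
          mul_inv_cancel_right₀ (rpow_pos_of_pos (hw i hi) a).ne']
    _ ≤ _ := holder
    _ = _ := by
        rw [one_div, inv_inv, one_div, inv_inv]
        congr 2
        · exact sum_congr rfl fun i hi => rpow_rpow_inv (mul_pos (hu i hi) (hw i hi)).le ha₀.ne'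
        · exact sum_congr rfl fun i hi => by rw [← rpow_mul (hw i hi).le, hb]

theorem Lp_mul_Lq_le_inner_of_pos_of_lt_one_s9 (ha₀ : 0 < a) (ha₁ : a < 1) (hab : a⁻¹ + b⁻¹ = 1)
    (hu : ∀ i ∈ s, 0 < u i) (hw : ∀ i ∈ s, 0 < w i) :
    (∑ i ∈ s, u i ^ a) ^ a⁻¹ * (∑ i ∈ s, w i ^ b) ^ b⁻¹ ≤ ∑ i ∈ s, u i * w i := by
  rcases s.eq_empty_or_nonempty with rfl | hs
  · simp [zero_rpow (inv_ne_zero ha₀.ne')]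
  have hU : 0 ≤ ∑ i ∈ s, u i ^ a := sum_nonneg fun i hi => (rpow_pos_of_pos (hu i hi) a).le
  have hI : 0 ≤ ∑ i ∈ s, u i * w i := sum_nonneg fun i hi => (mul_pos (hu i hi) (hw i hi)).le
  have hW : 0 < ∑ i ∈ s, w i ^ b := sum_pos (fun i hi => rpow_pos_of_pos (hw i hi) b) hs
  calc (∑ i ∈ s, u i ^ a) ^ a⁻¹ * (∑ i ∈ s, w i ^ b) ^ b⁻¹
      ≤ ((∑ i ∈ s, u i * w i) ^ a * (∑ i ∈ s, w i ^ b) ^ (1 - a)) ^ a⁻¹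
          * (∑ i ∈ s, w i ^ b) ^ b⁻¹ := by
        gcongr
        exact sum_rpow_le_inner_rpow_mul_sum_rpow_s9 s ha₀ ha₁ hab hu hw
    _ = (∑ i ∈ s, u i * w i) * (∑ i ∈ s, w i ^ b) ^ ((1 - a) * a⁻¹ + b⁻¹) := by
        rw [mul_rpow (rpow_nonneg hI a) (rpow_nonneg hW.le _), rpow_rpow_inv hI ha₀.ne',
          ← rpow_mul hW.le, mul_assoc, ← rpow_add hW]
    _ = ∑ i ∈ s, u i * w i := by
        have hexp : (1 - a) * a⁻¹ + b⁻¹ = 0 := by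
          rw [sub_mul, one_mul, mul_inv_cancel₀ ha₀.ne']
          linarith
        rw [hexp, rpow_zero, mul_one]

theorem Lp_mul_Lq_le_inner_of_lt_one (ha₀ : a ≠ 0) (ha₁ : a < 1) (hab : a⁻¹ + b⁻¹ = 1)
    (hu : ∀ i ∈ s, 0 < u i) (hw : ∀ i ∈ s, 0 < w i) :
    (∑ i ∈ s, u i ^ a) ^ a⁻¹ * (∑ i ∈ s, w i ^ b) ^ b⁻¹ ≤ ∑ i ∈ s, u i * w i := by
  rcases ha₀.lt_or_gt with ha | ha
  · have hb : 1 < b⁻¹ := by linarith [inv_lt_zero.2 ha]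
    obtain ⟨hb₀, hb₁⟩ := one_lt_inv_iff₀.1 hb
    rw [mul_comm]
    simpa only [mul_comm] using
      Lp_mul_Lq_le_inner_of_pos_of_lt_one_s9 s hb₀ hb₁ (by rwa [add_comm]) hw hu
  · exact Lp_mul_Lq_le_inner_of_pos_of_lt_one_s9 s ha ha₁ hab hu hw

end Real

section CES

variable {ι : Type*} [Fintype ι]

noncomputable def cesDemand (m s : ℝ) (p : ι → ℝ) (i : ι) : ℝ :=
  m * p i ^ (s - 1) / ∑ j, p j ^ s

variable {m r s : ℝ} {p : ι → ℝ}

theorem cesDemand_pos (hm : 0 < m) (hp : ∀ i, 0 < p i) (i : ι) : 0 < cesDemand m s p i :=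
  div_pos (mul_pos hm (Real.rpow_pos_of_pos (hp i) _))
    (sum_pos (fun j _ => Real.rpow_pos_of_pos (hp j) s) ⟨i, mem_univ i⟩)

theorem sum_mul_cesDemand [Nonempty ι] (hp : ∀ i, 0 < p i) :
    ∑ i, p i * cesDemand m s p i = m := by
  have hP : 0 < ∑ j, p j ^ s := sum_pos (fun j _ => Real.rpow_pos_of_pos (hp j) s) univ_nonempty
  calc ∑ i, p i * cesDemand m s p i = ∑ i, m * p i ^ s / ∑ j, p j ^ s :=
        sum_congr rfl fun i _ => by
          rw [cesDemand, Real.rpow_sub_one (hp i).ne']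
          field_simp [(hp i).ne']
    _ = m := by rw [← sum_div, ← mul_sum, mul_div_cancel_right₀ _ hP.ne']

theorem rpow_sum_cesDemand_rpow [Nonempty ι] (hm : 0 ≤ m) (hp : ∀ i, 0 < p i) (hr : r ≠ 0)
    (hs : s ≠ 0) (hrs : r⁻¹ + s⁻¹ = 1) :
    (∑ i, cesDemand m s p i ^ r) ^ r⁻¹ = m * (∑ i, p i ^ s) ^ (-s⁻¹) := by
  set P := ∑ j, p j ^ s
  have hP : 0 < P := sum_pos (fun j _ => Real.rpow_pos_of_pos (hp j) s) univ_nonempty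
  have hexp : (s - 1) * r = s := by
    field_simp at hrs
    linarith
  have hterm : ∀ i, cesDemand m s p i ^ r = m ^ r * p i ^ s / P ^ r := fun i => by
    have hpi := Real.rpow_pos_of_pos (hp i) (s - 1)
    rw [cesDemand, Real.div_rpow (mul_nonneg hm hpi.le) hP.le, Real.mul_rpow hm hpi.le,
      ← Real.rpow_mul (hp i).le, hexp]
  calc (∑ i, cesDemand m s p i ^ r) ^ r⁻¹ = (m ^ r * P ^ (1 - r)) ^ r⁻¹ := by
        rw [sum_congr rfl fun i _ => hterm i, ← sum_div, ← mul_sum, Real.rpow_sub hP,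
          Real.rpow_one, mul_div_assoc]
    _ = m * P ^ ((1 - r) * r⁻¹) := by
        rw [Real.mul_rpow (Real.rpow_nonneg hm r) (Real.rpow_nonneg hP.le _),
          Real.rpow_rpow_inv hm hr, ← Real.rpow_mul hP.le]
    _ = m * P ^ (-s⁻¹) := by
        rw [sub_mul, one_mul, mul_inv_cancel₀ hr]
        congr 2
        linarith

end CES

theorem ces_utility_max (n : ℕ) (r s : ℝ) (hr : r < 1) (hr0 : r ≠ 0)
    (hs : s = r / (r - 1)) (m : ℝ) (hm : 0 < m)
    (p : Fin n → ℝ) (hp : ∀ i, 0 < p i) :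
    IsGreatest {v : ℝ | ∃ x : Fin n → ℝ, (∀ i, 0 < x i) ∧
        (∑ i, p i * x i) ≤ m ∧ v = (∑ i, x i ^ r) ^ (1 / r)}
      (m * (∑ i, p i ^ s) ^ (-(1 / s))) ∧
    (∑ i, (m * p i ^ (s - 1) / ∑ j, p j ^ s) ^ r) ^ (1 / r) =
      m * (∑ i, p i ^ s) ^ (-(1 / s)) := by
  have hs0 : s ≠ 0 := hs ▸ div_ne_zero hr0 (by linarith)
  have hrs : r⁻¹ + s⁻¹ = 1 := by
    rw [hs, inv_div]
    field_simp
    ring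
  simp only [one_div]
  rcases isEmpty_or_nonempty (Fin n) with hn | hn
  · simp [Real.zero_rpow, hr0, hs0, hm.le, isGreatest_singleton]
  have hP : 0 < ∑ i, p i ^ s := sum_pos (fun i _ => Real.rpow_pos_of_pos (hp i) s) univ_nonempty
  have hvalue := rpow_sum_cesDemand_rpow hm.le hp hr0 hs0 hrs
  refine ⟨⟨⟨cesDemand m s p, cesDemand_pos hm hp, (sum_mul_cesDemand hp).le, hvalue.symm⟩, ?_⟩,
    hvalue⟩
  rintro v ⟨x, hx, hbudget, rfl⟩
  rw [Real.rpow_neg hP.le, ← div_eq_mul_inv, le_div_iff₀ (Real.rpow_pos_of_pos hP _)]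
  calc (∑ i, x i ^ r) ^ r⁻¹ * (∑ i, p i ^ s) ^ s⁻¹ ≤ ∑ i, x i * p i :=
        Real.Lp_mul_Lq_le_inner_of_lt_one univ hr0 hr hrs (fun i _ => hx i) (fun i _ => hp i)
    _ ≤ m := by simpa only [mul_comm] using hbudget
end
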